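/- arXiv:math/0606342 — 4 statements merged into one kernel-verified Lean document; each statement's English description precedes it below -/
import Mathlib

section
/- For every λ ∈ ℂ with λ ≠ 0 and every point p of the nonsingular fibre F_λ = {(z₁, z₂) ∈ ℂ × ℂ : z₁² + z₂² = λ}, the fundamental group of F_λ based at p is isomorphic (as a group) to ℤ. -/
/-!
Since `z₁² + z₂² = (z₁ + i z₂)(z₁ - i z₂)`, the map `(z₁, z₂) ↦ z₁ + i z₂` identifies the fibre
`F_λ` (for `λ ≠ 0`) with `ℂ ∖ {0}`, with inverse `w ↦ ((w + λ/w)/2, (w - λ/w)/(2i))`.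
Composing with `exp : ℂ → ℂ ∖ {0}` gives a covering of `F_λ` by the simply connected plane
whose deck group is `2πiℤ ≅ ℤ`, and the fundamental group of the base of such a covering is
its deck group.
-/

open Complex

lemma add_I_mul_mul_sub_I_mul (z₁ z₂ : ℂ) :
    (z₁ + I * z₂) * (z₁ - I * z₂) = z₁ ^ 2 + z₂ ^ 2 := by
  linear_combination (-z₂ ^ 2) * I_sq

lemma add_I_mul_ne_zero {z₁ z₂ : ℂ} (h : z₁ ^ 2 + z₂ ^ 2 ≠ 0) : z₁ + I * z₂ ≠ 0 := by
  rw [← add_I_mul_mul_sub_I_mul] at h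
  exact left_ne_zero_of_mul h

noncomputable def sumSqFibreHomeomorph {l : ℂ} (hl : l ≠ 0) :
    {w : ℂ // w ≠ 0} ≃ₜ {q : ℂ × ℂ | q.1 ^ 2 + q.2 ^ 2 = l} where
  toFun w := ⟨((w + l / w) / 2, (w - l / w) / (2 * I)), by
    have hw := w.2
    change _ = l
    field_simp
    linear_combination (-(w : ℂ) ^ 2 + l) ^ 2 * I_sq⟩
  invFun q := ⟨q.1.1 + I * q.1.2, add_I_mul_ne_zero (q.2.trans_ne hl)⟩
  left_inv w := by
    have hw := w.2
    ext
    field_simp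
    ring
  right_inv := by
    rintro ⟨⟨z₁, z₂⟩, hq : z₁ ^ 2 + z₂ ^ 2 = l⟩
    have hz : z₁ + I * z₂ ≠ 0 := add_I_mul_ne_zero (hq.trans_ne hl)
    have hl' : l / (z₁ + I * z₂) = z₁ - I * z₂ := by
      rw [div_eq_iff hz, ← hq, ← add_I_mul_mul_sub_I_mul, mul_comm]
    ext <;> simp only [hl'] <;> field_simp <;> ring
  continuous_toFun := by
    refine Continuous.subtype_mk ?_ _
    have : Continuous fun w : {w : ℂ // w ≠ 0} ↦ l / (w : ℂ) :=
      continuous_const.div continuous_subtype_val (fun w ↦ w.2)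
    fun_prop
  continuous_invFun := by fun_prop

noncomputable def AddSubgroup.zmultiplesAddEquivInt {A : Type*} [AddGroup A] {a : A}
    (ha : ¬IsOfFinAddOrder a) : zmultiples a ≃+ ℤ :=
  ((AddMonoidHom.ofInjective (f := zmultiplesHom A a)
    (injective_zsmul_iff_not_isOfFinAddOrder.mpr ha)).trans
    (AddEquiv.addSubgroupCongr (range_zmultiplesHom a))).symm

/-- Proposition 5.2.3(2), π₁-version: for `λ ≠ 0`, the fundamental group of the
nonsingular fibre `F_λ = {(z₁,z₂) : z₁² + z₂² = λ}` at any basepoint is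
infinite cyclic, i.e. isomorphic to `ℤ`. -/
theorem stmt5 (l : ℂ) (hl : l ≠ 0)
    (p : {q : ℂ × ℂ | q.1 ^ 2 + q.2 ^ 2 = l}) :
    Nonempty
      (FundamentalGroup {q : ℂ × ℂ | q.1 ^ 2 + q.2 ^ 2 = l} p ≃* Multiplicative ℤ) := by
  have hcov := isAddQuotientCoveringMap_exp.homeomorph_comp (sumSqFibreHomeomorph hl)
  obtain ⟨z, hz⟩ := hcov.surjective p
  have h2πI : ¬IsOfFinAddOrder (2 * Real.pi * I) :=
    not_isOfFinAddOrder_of_isAddTorsionFree (by simp [Real.pi_ne_zero, I_ne_zero])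
  exact ⟨(hcov.fundamentalGroupEquiv ⟨z, hz⟩).trans <| MulOpposite.opMulEquiv.symm.trans <|
    AddEquiv.toMultiplicative (AddSubgroup.zmultiplesAddEquivInt h2πI)⟩
end

section
/- For every m ≥ 1 and every λ ∈ ℂ with λ ≠ 0, the complex quadric Q_λ = {z ∈ Fin m → ℂ : ∑_i z_i² = λ} is homeomorphic to the total space of the tangent bundle of the unit (m−1)-sphere realized as the subspace {(u, v) ∈ ℝ^m × ℝ^m : ‖u‖ = 1 and ⟨u, v⟩ = 0} of ℝ^m × ℝ^m (with the Euclidean norm and inner product). -/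
/-!
Choosing `μ` with `μ² = λ`, the dilation `z ↦ μ z` carries `Q_1` onto `Q_λ`. Writing
`z = x + i y`, the equation `∑ z_i² = 1` splits into `‖x‖² = 1 + ‖y‖²` and `⟪x, y⟫ = 0`;
on this set `‖x‖ ≥ 1`, so `(x, y) ↦ (x / ‖x‖, y)` is a homeomorphism onto the tangent bundle
model, with inverse `(u, v) ↦ (√(1 + ‖v‖²) u, v)`.
-/

open Finset RealInnerProductSpace

noncomputable section

def quadric {ι K : Type*} [Fintype ι] [CommRing K] (c : K) : Set (ι → K) :=
  {z | ∑ i, z i ^ 2 = c}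

section Scaling

variable {ι K : Type*} [Fintype ι] [Field K]

theorem smul_mem_quadric_iff {μ : K} (hμ : μ ≠ 0) {c : K} {z : ι → K} :
    μ • z ∈ quadric (μ ^ 2 * c) ↔ z ∈ quadric c := by
  change ∑ i, (μ * z i) ^ 2 = μ ^ 2 * c ↔ ∑ i, z i ^ 2 = c
  simp only [mul_pow, ← mul_sum]
  exact mul_right_inj' (pow_ne_zero 2 hμ)

def quadricHomeomorphSMul [TopologicalSpace K] [ContinuousMul K] {μ : K} (hμ : μ ≠ 0) (c : K) :
    quadric (ι := ι) c ≃ₜ quadric (ι := ι) (μ ^ 2 * c) :=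
  (Homeomorph.smulOfNeZero μ hμ).subtype fun _ => (smul_mem_quadric_iff hμ).symm

end Scaling

section TangentBundle

variable (E : Type*) [NormedAddCommGroup E] [InnerProductSpace ℝ E]

def sphereTangentBundle : Set (E × E) := {p | ‖p.1‖ = 1 ∧ ⟪p.1, p.2⟫ = 0}

def orthogonalHyperboloid : Set (E × E) := {p | ‖p.1‖ ^ 2 = 1 + ‖p.2‖ ^ 2 ∧ ⟪p.1, p.2⟫ = 0}

variable {E}

theorem norm_fst_of_mem_orthogonalHyperboloid {p : E × E} (hp : p ∈ orthogonalHyperboloid E) :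
    ‖p.1‖ = √(1 + ‖p.2‖ ^ 2) := by
  rw [← hp.1, Real.sqrt_sq (norm_nonneg _)]

theorem norm_fst_pos_of_mem_orthogonalHyperboloid {p : E × E}
    (hp : p ∈ orthogonalHyperboloid E) : 0 < ‖p.1‖ := by
  rw [norm_fst_of_mem_orthogonalHyperboloid hp]
  positivity

def orthogonalHyperboloidHomeomorph : orthogonalHyperboloid E ≃ₜ sphereTangentBundle E where
  toFun p := ⟨(‖p.1.1‖⁻¹ • p.1.1, p.1.2), by
    have hx := norm_fst_pos_of_mem_orthogonalHyperboloid p.2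
    refine ⟨?_, ?_⟩
    · rw [norm_smul, norm_inv, norm_norm, inv_mul_cancel₀ hx.ne']
    · rw [real_inner_smul_left, p.2.2, mul_zero]⟩
  invFun p := ⟨(√(1 + ‖p.1.2‖ ^ 2) • p.1.1, p.1.2), by
    refine ⟨?_, ?_⟩
    · rw [norm_smul, p.2.1, mul_one, Real.norm_eq_abs, sq_abs, Real.sq_sqrt (by positivity)]
    · rw [real_inner_smul_left, p.2.2, mul_zero]⟩
  left_inv p := by
    have hx := norm_fst_pos_of_mem_orthogonalHyperboloid p.2
    ext1
    simp only [← norm_fst_of_mem_orthogonalHyperboloid p.2, smul_smul, mul_inv_cancel₀ hx.ne',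
      one_smul]
  right_inv p := by
    have hs : 0 < √(1 + ‖p.1.2‖ ^ 2) := by positivity
    ext1
    simp only [norm_smul, Real.norm_eq_abs, abs_of_pos hs, p.2.1, mul_one, smul_smul,
      inv_mul_cancel₀ hs.ne', one_smul]
  continuous_toFun := by
    refine Continuous.subtype_mk (Continuous.prodMk ?_ (by fun_prop)) _
    exact ((by fun_prop : Continuous fun p : orthogonalHyperboloid E => ‖p.1.1‖).inv₀
      fun p => (norm_fst_pos_of_mem_orthogonalHyperboloid p.2).ne').smul (by fun_prop)
  continuous_invFun := by fun_prop

end TangentBundle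

section ReIm

variable {ι : Type*} [Fintype ι]

def reImHomeomorph : (ι → ℂ) ≃ₜ EuclideanSpace ℝ ι × EuclideanSpace ℝ ι where
  toFun z := (WithLp.toLp 2 fun i => (z i).re, WithLp.toLp 2 fun i => (z i).im)
  invFun p i := p.1 i + p.2 i * Complex.I
  left_inv z := funext fun i => Complex.re_add_im (z i)
  right_inv p := by ext <;> simp
  continuous_toFun := by fun_prop
  continuous_invFun := by fun_prop

theorem re_sum_sq_eq_norm_sq_sub_norm_sq (z : ι → ℂ) :
    (∑ i, z i ^ 2).re = ‖(reImHomeomorph z).1‖ ^ 2 - ‖(reImHomeomorph z).2‖ ^ 2 := by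
  simp only [Complex.re_sum, EuclideanSpace.real_norm_sq_eq, ← sum_sub_distrib]
  exact sum_congr rfl fun i _ => by simp [reImHomeomorph, sq]

theorem im_sum_sq_eq_two_mul_inner (z : ι → ℂ) :
    (∑ i, z i ^ 2).im = 2 * ⟪(reImHomeomorph z).1, (reImHomeomorph z).2⟫ := by
  simp only [Complex.im_sum, EuclideanSpace.inner_eq_star_dotProduct, dotProduct, mul_sum]
  exact sum_congr rfl fun i _ => by simp [reImHomeomorph, sq]; ring

theorem mem_quadric_one_iff (z : ι → ℂ) :
    z ∈ quadric 1 ↔ reImHomeomorph z ∈ orthogonalHyperboloid (EuclideanSpace ℝ ι) := by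
  change ∑ i, z i ^ 2 = 1 ↔ _ ∧ _
  rw [Complex.ext_iff, re_sum_sq_eq_norm_sq_sub_norm_sq, im_sum_sq_eq_two_mul_inner,
    Complex.one_re, Complex.one_im, sub_eq_iff_eq_add, mul_eq_zero, or_iff_right two_ne_zero]

end ReIm

def quadricOneHomeomorph (ι : Type*) [Fintype ι] :
    quadric (ι := ι) (1 : ℂ) ≃ₜ sphereTangentBundle (EuclideanSpace ℝ ι) :=
  (reImHomeomorph.subtype mem_quadric_one_iff).trans orthogonalHyperboloidHomeomorph

end

theorem stmt6_general (m : ℕ) (l : ℂ) (hl : l ≠ 0) :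
    Nonempty
      (({z : Fin m → ℂ | ∑ i, z i ^ 2 = l} : Set (Fin m → ℂ)) ≃ₜ
        {uv : EuclideanSpace ℝ (Fin m) × EuclideanSpace ℝ (Fin m) |
          ‖uv.1‖ = 1 ∧ inner ℝ uv.1 uv.2 = (0 : ℝ)}) := by
  obtain ⟨μ, rfl⟩ := IsAlgClosed.exists_pow_nat_eq l two_pos
  have hμ : μ ≠ 0 := by rintro rfl; simp at hl
  have e := (quadricHomeomorphSMul hμ 1).symm.trans (quadricOneHomeomorph (Fin m))
  rw [mul_one] at e
  exact ⟨e⟩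

/-- §5.1.5: for `λ ≠ 0` the nonsingular complex quadric
`Q_λ = {z ∈ ℂ^m : ∑ z_i² = λ}` is homeomorphic to the total space of the tangent
bundle of the unit `(m−1)`-sphere, realized as
`{(u,v) ∈ ℝ^m × ℝ^m : ‖u‖ = 1, ⟨u,v⟩ = 0}`. -/
theorem stmt6 (m : ℕ) (hm : 1 ≤ m) (l : ℂ) (hl : l ≠ 0) :
    Nonempty
      (({z : Fin m → ℂ | ∑ i, z i ^ 2 = l} : Set (Fin m → ℂ)) ≃ₜ
        {uv : EuclideanSpace ℝ (Fin m) × EuclideanSpace ℝ (Fin m) |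
          ‖uv.1‖ = 1 ∧ inner ℝ uv.1 uv.2 = (0 : ℝ)}) :=
  stmt6_general m l hl
end

section
/- For every m ≥ 1 and every λ ∈ ℂ with λ ≠ 0, the complex quadric Q_λ = {z ∈ Fin m → ℂ : ∑_i z_i² = λ} is homotopy equivalent to the unit sphere {x ∈ EuclideanSpace ℝ (Fin m) : ‖x‖ = 1}. -/
/-!
Write `z = x + i y` with `x, y ∈ ℝ^m`; then `∑ z_i² = 1` says `|x|² - |y|² = 1` and `x ⬝ y = 0`.
Replacing `y` by `t y` keeps `∑ z_i²` real and `≥ 1` for `t ∈ [0, 1]`, so renormalising by its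
square root deforms `Q_1` within itself onto the real unit sphere `{y = 0}`. For `λ ≠ 0`, scaling
by a square root of `λ` is a homeomorphism `Q_1 ≃ Q_λ`.
-/

open Finset unitInterval

noncomputable section

namespace ComplexQuadric

variable {ι : Type*}

def squashIm (s : ℝ) (w : ℂ) : ℂ := w.re + s * w.im * Complex.I

@[simp]
theorem re_squashIm (s : ℝ) (w : ℂ) : (squashIm s w).re = w.re := by
  simp [squashIm]

@[simp]
theorem im_squashIm (s : ℝ) (w : ℂ) : (squashIm s w).im = s * w.im := by
  simp [squashIm]

theorem continuous_squashIm : Continuous fun p : ℝ × ℂ => squashIm p.1 p.2 := by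
  unfold squashIm; fun_prop

variable [Fintype ι]

def quadric (ι : Type*) [Fintype ι] (l : ℂ) : Set (ι → ℂ) := {z | ∑ i, z i ^ 2 = l}

theorem sum_mul_sq (c : ℂ) (z : ι → ℂ) : ∑ i, (c * z i) ^ 2 = c ^ 2 * ∑ i, z i ^ 2 := by
  simp_rw [mul_pow, ← mul_sum]

def quadricHomeomorph {l l' c : ℂ} (hc : c ≠ 0) (h : c ^ 2 * l = l') :
    quadric ι l ≃ₜ quadric ι l' :=
  (Homeomorph.smulOfNeZero c hc).subtype fun z => by
    simp only [quadric, Set.mem_ofPred_eq, Homeomorph.smulOfNeZero_apply, Pi.smul_apply,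
      smul_eq_mul, sum_mul_sq, ← h]
    exact (mul_right_inj' (pow_ne_zero 2 hc)).symm

theorem re_sum_sq (z : ι → ℂ) :
    (∑ i, z i ^ 2).re = ∑ i, (z i).re ^ 2 - ∑ i, (z i).im ^ 2 := by
  simp [Complex.re_sum, sq, sum_sub_distrib]

theorem im_sum_sq (z : ι → ℂ) : (∑ i, z i ^ 2).im = 2 * ∑ i, (z i).re * (z i).im := by
  simp only [Complex.im_sum, sq, Complex.mul_im, mul_sum]
  exact sum_congr rfl fun i _ => by ring

theorem sum_re_sq_of_mem {z : ι → ℂ} (hz : z ∈ quadric ι 1) :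
    ∑ i, (z i).re ^ 2 = 1 + ∑ i, (z i).im ^ 2 := by
  have := re_sum_sq z
  rw [hz.out, Complex.one_re] at this
  linarith

def squashSumSq (t : ℝ) (z : ι → ℂ) : ℝ := 1 + (1 - t ^ 2) * ∑ i, (z i).im ^ 2

theorem sum_sq_squashIm {z : ι → ℂ} (hz : z ∈ quadric ι 1) (s : ℝ) :
    ∑ i, squashIm s (z i) ^ 2 = squashSumSq s z := by
  have hre := sum_re_sq_of_mem hz
  have him := im_sum_sq z
  rw [hz.out, Complex.one_im, zero_eq_mul] at him
  apply Complex.ext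
  · simp only [re_sum_sq, re_squashIm, im_squashIm, squashSumSq, Complex.ofReal_re, mul_pow,
      ← mul_sum, hre]
    ring
  · simp only [im_sum_sq, re_squashIm, im_squashIm, Complex.ofReal_im, mul_left_comm _ s,
      ← mul_sum, him.resolve_left two_ne_zero, mul_zero]

theorem inv_sqrt_mul_mem_quadric_one {w : ι → ℂ} {r : ℝ} (hr : 0 < r)
    (hw : ∑ i, w i ^ 2 = r) :
    (fun i => ((√r)⁻¹ : ℝ) * w i) ∈ quadric ι 1 := by
  simp only [quadric, Set.mem_ofPred_eq, sum_mul_sq, hw]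
  rw [← Complex.ofReal_pow, ← Complex.ofReal_mul, inv_pow, Real.sq_sqrt hr.le,
    inv_mul_cancel₀ hr.ne', Complex.ofReal_one]

theorem one_le_squashSumSq {t : ℝ} (ht : t ∈ I) (z : ι → ℂ) : 1 ≤ squashSumSq t z := by
  have : t ^ 2 ≤ 1 := pow_le_one₀ ht.1 ht.2
  have := sum_nonneg fun i (_ : i ∈ univ) => sq_nonneg (z i).im
  unfold squashSumSq
  nlinarith

def reVec (z : ι → ℂ) : EuclideanSpace ℝ ι := WithLp.toLp 2 fun i => (z i).re

theorem norm_reVec {z : ι → ℂ} (hz : z ∈ quadric ι 1) :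
    ‖reVec z‖ = √(squashSumSq 0 z) := by
  rw [EuclideanSpace.norm_eq]
  simp only [reVec, PiLp.toLp_apply, Real.norm_eq_abs, sq_abs, sum_re_sq_of_mem hz, squashSumSq]
  norm_num

theorem reVec_ne_zero {z : ι → ℂ} (hz : z ∈ quadric ι 1) : reVec z ≠ 0 := by
  rw [← norm_pos_iff, norm_reVec hz]
  exact Real.sqrt_pos.2 (one_pos.trans_le (one_le_squashSumSq zero_mem z))

def sphereRetraction : C(quadric ι 1, {x : EuclideanSpace ℝ ι | ‖x‖ = 1}) where
  toFun z := ⟨‖reVec z.1‖⁻¹ • reVec z.1, norm_smul_inv_norm (reVec_ne_zero z.2)⟩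
  continuous_toFun := by
    have : Continuous fun z : quadric ι 1 => reVec z.1 :=
      (PiLp.continuous_toLp 2 _).comp <|
        continuous_pi fun i =>
          Complex.continuous_re.comp ((continuous_apply i).comp continuous_subtype_val)
    refine Continuous.subtype_mk ?_ _
    exact (this.norm.inv₀ fun z => norm_ne_zero_iff.2 (reVec_ne_zero z.2)).smul this

def sphereInclusion : C({x : EuclideanSpace ℝ ι | ‖x‖ = 1}, quadric ι 1) where
  toFun x := ⟨fun i => (x.1 i : ℂ), by
    have hx := EuclideanSpace.real_norm_sq_eq x.1
    rw [x.2.out, one_pow] at hx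
    simp only [quadric, Set.mem_ofPred_eq]
    exact_mod_cast hx.symm⟩
  continuous_toFun := by
    have : Continuous fun x : EuclideanSpace ℝ ι => x.ofLp := PiLp.continuous_ofLp 2 _
    fun_prop

theorem sphereRetraction_comp_sphereInclusion :
    (sphereRetraction (ι := ι)).comp sphereInclusion = ContinuousMap.id _ := by
  ext x i
  have : reVec (sphereInclusion x).1 = x.1 := rfl
  simp [sphereRetraction, this, x.2.out]

def quadricDeform (t : ℝ) (z : ι → ℂ) : ι → ℂ :=
  fun i => ((√(squashSumSq t z))⁻¹ : ℝ) * squashIm t (z i)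

theorem quadricDeform_mem {t : ℝ} (ht : t ∈ I) {z : ι → ℂ} (hz : z ∈ quadric ι 1) :
    quadricDeform t z ∈ quadric ι 1 :=
  inv_sqrt_mul_mem_quadric_one (one_pos.trans_le (one_le_squashSumSq ht z)) (sum_sq_squashIm hz t)

def quadricDeformation : ContinuousMap.Homotopy (sphereInclusion.comp sphereRetraction)
    (ContinuousMap.id (quadric ι 1)) where
  toFun p := ⟨quadricDeform p.1 p.2.1, quadricDeform_mem p.1.2 p.2.2⟩
  continuous_toFun := by
    have hp : Continuous fun p : I × quadric ι 1 => ((p.1 : ℝ), p.2.1) :=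
      (continuous_subtype_val.comp continuous_fst).prodMk
        (continuous_subtype_val.comp continuous_snd)
    have hN : Continuous fun p : I × quadric ι 1 => squashSumSq p.1 p.2.1 :=
      (by unfold squashSumSq; fun_prop :
        Continuous fun q : ℝ × (ι → ℂ) => squashSumSq q.1 q.2).comp hp
    have hsq : Continuous fun p : I × quadric ι 1 => (√(squashSumSq p.1 p.2.1))⁻¹ :=
      hN.sqrt.inv₀ fun p => (Real.sqrt_pos.2 (one_pos.trans_le (one_le_squashSumSq p.1.2 _))).ne'
    refine Continuous.subtype_mk (continuous_pi fun i => ?_) _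
    exact (Complex.continuous_ofReal.comp hsq).mul
      (continuous_squashIm.comp ((continuous_id.prodMap (continuous_apply i)).comp hp))
  map_zero_left z := by
    ext i
    simp only [quadricDeform, sphereInclusion, sphereRetraction, ContinuousMap.comp_apply,
      ContinuousMap.coe_mk, norm_reVec z.2]
    simp [reVec, squashIm]
  map_one_left z := by
    ext i
    simp [quadricDeform, squashSumSq, squashIm]

def quadricOneHomotopyEquiv :
    ContinuousMap.HomotopyEquiv (quadric ι 1) {x : EuclideanSpace ℝ ι | ‖x‖ = 1} where
  toFun := sphereRetraction
  invFun := sphereInclusion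
  left_inv := ⟨quadricDeformation⟩
  right_inv := by rw [sphereRetraction_comp_sphereInclusion]

end ComplexQuadric

end

theorem stmt7_general (m : ℕ) (l : ℂ) (hl : l ≠ 0) :
    Nonempty
      (ContinuousMap.HomotopyEquiv
        ({z : Fin m → ℂ | ∑ i, z i ^ 2 = l} : Set (Fin m → ℂ))
        ({x : EuclideanSpace ℝ (Fin m) | ‖x‖ = 1} : Set (EuclideanSpace ℝ (Fin m)))) := by
  obtain ⟨c, hc⟩ := IsAlgClosed.exists_pow_nat_eq l two_pos
  have hc0 : c ≠ 0 := by rintro rfl; exact hl (by simpa using hc.symm)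
  exact ⟨(ComplexQuadric.quadricHomeomorph hc0 (by rw [mul_one, hc])).symm.toHomotopyEquiv.trans
    ComplexQuadric.quadricOneHomotopyEquiv⟩

/-- §5.1.5 / §5.1.8: for `λ ≠ 0` the nonsingular complex quadric
`Q_λ = {z ∈ ℂ^m : ∑ z_i² = λ}` is homotopy equivalent to the unit sphere
`S^{m−1} = {x ∈ ℝ^m : ‖x‖ = 1}`. -/
theorem stmt7 (m : ℕ) (hm : 1 ≤ m) (l : ℂ) (hl : l ≠ 0) :
    Nonempty
      (ContinuousMap.HomotopyEquiv
        ({z : Fin m → ℂ | ∑ i, z i ^ 2 = l} : Set (Fin m → ℂ))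
        ({x : EuclideanSpace ℝ (Fin m) | ‖x‖ = 1} : Set (EuclideanSpace ℝ (Fin m)))) :=
  stmt7_general m l hl
end

section
/- Let m ≥ 1 and let λ be a real number with λ > 0. Then the set Δ_λ of real points of the complex quadric, Δ_λ = {z ∈ Fin m → ℂ : ∑_i z_i² = λ and Im(z_i) = 0 for all i}, with the subspace topology, is homeomorphic to the unit sphere {x ∈ EuclideanSpace ℝ (Fin m) : ‖x‖ = 1}, and moreover Δ_λ is homotopy equivalent to the full fibre Q_λ = {z ∈ Fin m → ℂ : ∑_i z_i² = λ}. -/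
/-!
Write `z = x + i y` with `x, y ∈ ℝ^m`. Then `∑ z_i² = λ` means `|x|² - |y|² = λ` and `⟨x, y⟩ = 0`,
so the real points of `Q_λ` form the sphere `|x| = √λ`. For `s ∈ [0, 1]` the map
`x + i y ↦ c_s x + i s y` with `c_s = √((λ + s²|y|²) / (λ + |y|²))` preserves both equations
(because `|x|² = λ + |y|²`); it is the identity at `s = 1` and on real points, and at `s = 0`
it lands in the real points. Hence `Δ_λ` is a deformation retract of `Q_λ`.
-/

open ContinuousMap unitInterval

section DeformationRetract

variable {X : Type*} [TopologicalSpace X]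

noncomputable def ContinuousMap.HomotopyEquiv.ofDeformationRetract {A B : Set X} (hAB : A ⊆ B)
    (H : C(I × B, B)) (h_zero : ∀ b, (H (0, b) : X) ∈ A) (h_one : ∀ b, H (1, b) = b)
    (h_fix : ∀ b : B, (b : X) ∈ A → H (0, b) = b) : A ≃ₕ B where
  toFun := ⟨Set.inclusion hAB, continuous_inclusion hAB⟩
  invFun := ⟨fun b => ⟨H (0, b), h_zero b⟩, by fun_prop⟩
  left_inv := by
    convert Homotopic.refl (ContinuousMap.id A)
    ext a
    exact (congrArg Subtype.val (h_fix (Set.inclusion hAB a) a.2) :)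
  right_inv := ⟨{ toContinuousMap := H, map_zero_left := fun _ => rfl, map_one_left := h_one }⟩

end DeformationRetract

theorem EuclideanSpace.real_norm_eq_one_iff {ι : Type*} [Fintype ι] (x : EuclideanSpace ℝ ι) :
    ‖x‖ = 1 ↔ ∑ i, x i ^ 2 = 1 := by
  rw [← pow_eq_one_iff_of_nonneg (norm_nonneg x) two_ne_zero, EuclideanSpace.real_norm_sq_eq]

section Quadric

variable {ι : Type*} [Fintype ι]

theorem sum_sq_eq_ofReal_iff (z : ι → ℂ) (l : ℝ) :
    ∑ i, z i ^ 2 = l ↔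
      ∑ i, (z i).re ^ 2 - ∑ i, (z i).im ^ 2 = l ∧ ∑ i, (z i).re * (z i).im = 0 := by
  simp [Complex.ext_iff, Complex.re_sum, Complex.im_sum, sq, Finset.sum_sub_distrib,
    mul_comm (z _).im, ← two_mul, ← Finset.mul_sum]

variable (ι) in
def quadricFibre (l : ℝ) : Set (ι → ℂ) := {z | ∑ i, z i ^ 2 = (l : ℂ)}

variable (ι) in
def vanishingCycle (l : ℝ) : Set (ι → ℂ) := {z | ∑ i, z i ^ 2 = (l : ℂ) ∧ ∀ i, (z i).im = 0}

theorem vanishingCycle_subset_quadricFibre (l : ℝ) : vanishingCycle ι l ⊆ quadricFibre ι l :=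
  fun _ hz => hz.1

theorem mem_vanishingCycle_iff {l : ℝ} {z : ι → ℂ} :
    z ∈ vanishingCycle ι l ↔ ∑ i, (z i).re ^ 2 = l ∧ ∀ i, (z i).im = 0 := by
  simp +contextual [vanishingCycle, sum_sq_eq_ofReal_iff]

noncomputable def vanishingCycleHomeomorphSphere {l : ℝ} (hl : 0 < l) :
    vanishingCycle ι l ≃ₜ {x : EuclideanSpace ℝ ι | ‖x‖ = 1} where
  toFun z := ⟨WithLp.toLp 2 fun i => (z.1 i).re / √l, by
    simp [EuclideanSpace.real_norm_eq_one_iff, div_pow, ← Finset.sum_div,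
      (mem_vanishingCycle_iff.1 z.2).1, hl.le, hl.ne']⟩
  invFun x := ⟨fun i => (√l * x.1 i : ℝ), by
    have hx := (EuclideanSpace.real_norm_eq_one_iff _).1 x.2
    simp [mem_vanishingCycle_iff, mul_pow, ← Finset.mul_sum, hx, hl.le]⟩
  left_inv z := by
    have hsl : √l ≠ 0 := by positivity
    ext i : 2
    apply Complex.ext <;> simp [(mem_vanishingCycle_iff.1 z.2).2 i, mul_div_cancel₀ _ hsl]
  right_inv x := by
    have hsl : √l ≠ 0 := by positivity
    ext i
    simp [hsl]
  continuous_toFun := by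
    apply Continuous.subtype_mk
    exact (by fun_prop : Continuous fun z : ι → ℂ => WithLp.toLp 2 fun i => (z i).re / √l).comp
      continuous_subtype_val
  continuous_invFun := by
    apply Continuous.subtype_mk
    exact (by fun_prop : Continuous fun (x : EuclideanSpace ℝ ι) i => ((√l * x i : ℝ) : ℂ)).comp
      continuous_subtype_val

noncomputable def quadricDeformation (l s : ℝ) (z : ι → ℂ) : ι → ℂ := fun i =>
  (√((l + s ^ 2 * ∑ j, (z j).im ^ 2) / (l + ∑ j, (z j).im ^ 2)) * (z i).re : ℝ) +
    (s * (z i).im : ℝ) * Complex.I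

@[simp]
theorem quadricDeformation_re (l s : ℝ) (z : ι → ℂ) (i : ι) :
    (quadricDeformation l s z i).re =
      √((l + s ^ 2 * ∑ j, (z j).im ^ 2) / (l + ∑ j, (z j).im ^ 2)) * (z i).re := by
  simp [quadricDeformation]

@[simp]
theorem quadricDeformation_im (l s : ℝ) (z : ι → ℂ) (i : ι) :
    (quadricDeformation l s z i).im = s * (z i).im := by
  simp [quadricDeformation]

theorem continuous_quadricDeformation {l : ℝ} (hl : 0 < l) :
    Continuous fun p : ℝ × (ι → ℂ) => quadricDeformation l p.1 p.2 := by
  have hden : ∀ z : ι → ℂ, l + ∑ i, (z i).im ^ 2 ≠ 0 := fun z => by positivity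
  unfold quadricDeformation
  fun_prop (disch := exact fun p => hden p.2)

theorem quadricDeformation_mem {l : ℝ} (hl : 0 < l) (s : ℝ) {z : ι → ℂ}
    (hz : z ∈ quadricFibre ι l) : quadricDeformation l s z ∈ quadricFibre ι l := by
  rw [quadricFibre, Set.mem_ofPred_eq, sum_sq_eq_ofReal_iff] at hz ⊢
  obtain ⟨hX, hP⟩ := hz
  have hY : 0 ≤ ∑ i, (z i).im ^ 2 := by positivity
  simp only [quadricDeformation_re, quadricDeformation_im, mul_pow, ← Finset.mul_sum,
    mul_mul_mul_comm, hP, mul_zero]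
  rw [Real.sq_sqrt (by positivity), show ∑ i, (z i).re ^ 2 = l + ∑ i, (z i).im ^ 2 by linarith]
  refine ⟨?_, trivial⟩
  field_simp
  ring

theorem quadricDeformation_one {l : ℝ} (hl : 0 < l) (z : ι → ℂ) :
    quadricDeformation l 1 z = z := by
  have : l + ∑ i, (z i).im ^ 2 ≠ 0 := by positivity
  funext i
  apply Complex.ext <;> simp [this]

theorem quadricDeformation_zero_mem {l : ℝ} (hl : 0 < l) {z : ι → ℂ}
    (hz : z ∈ quadricFibre ι l) : quadricDeformation l 0 z ∈ vanishingCycle ι l :=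
  ⟨quadricDeformation_mem hl 0 hz, fun i => by simp⟩

theorem quadricDeformation_zero_of_mem_vanishingCycle {l : ℝ} (hl : 0 < l) {z : ι → ℂ}
    (hz : z ∈ vanishingCycle ι l) : quadricDeformation l 0 z = z := by
  funext i
  apply Complex.ext <;> simp [hz.2, hl.ne']

noncomputable def quadricFibreDeformation {l : ℝ} (hl : 0 < l) :
    C(I × quadricFibre ι l, quadricFibre ι l) where
  toFun p := ⟨quadricDeformation l p.1 p.2.1, quadricDeformation_mem hl _ p.2.2⟩
  continuous_toFun := by
    apply Continuous.subtype_mk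
    exact (continuous_quadricDeformation hl).comp
      (continuous_subtype_val.prodMap continuous_subtype_val)

noncomputable def vanishingCycleHomotopyEquivQuadricFibre {l : ℝ} (hl : 0 < l) :
    vanishingCycle ι l ≃ₕ quadricFibre ι l :=
  .ofDeformationRetract (vanishingCycle_subset_quadricFibre l) (quadricFibreDeformation hl)
    (fun z => by simpa [quadricFibreDeformation] using quadricDeformation_zero_mem hl z.2)
    (fun z => Subtype.ext <| by
      simpa [quadricFibreDeformation] using quadricDeformation_one hl z.1)
    (fun _ hz => Subtype.ext <| by
      simpa [quadricFibreDeformation] using quadricDeformation_zero_of_mem_vanishingCycle hl hz)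

end Quadric

theorem stmt8_general (m : ℕ) (l : ℝ) (hl : 0 < l) :
    Nonempty
      (({z : Fin m → ℂ | ∑ i, z i ^ 2 = (l : ℂ) ∧ ∀ i, (z i).im = 0} :
          Set (Fin m → ℂ)) ≃ₜ
        ({x : EuclideanSpace ℝ (Fin m) | ‖x‖ = 1} : Set (EuclideanSpace ℝ (Fin m)))) ∧
      Nonempty
        (ContinuousMap.HomotopyEquiv
          ({z : Fin m → ℂ | ∑ i, z i ^ 2 = (l : ℂ) ∧ ∀ i, (z i).im = 0} :
            Set (Fin m → ℂ))
          ({z : Fin m → ℂ | ∑ i, z i ^ 2 = (l : ℂ)} : Set (Fin m → ℂ))) :=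
  ⟨⟨vanishingCycleHomeomorphSphere hl⟩, ⟨vanishingCycleHomotopyEquivQuadricFibre hl⟩⟩

/-- §5.1.5: for real `λ > 0`, the vanishing cycle, i.e. the set of real points
`Δ_λ = {z ∈ ℂ^m : ∑ z_i² = λ, Im z_i = 0}` of the quadric, is homeomorphic to the
unit sphere `S^{m−1}`, and `Δ_λ` is homotopy equivalent to the full nonsingular
fibre `Q_λ`. -/
theorem stmt8 (m : ℕ) (hm : 1 ≤ m) (l : ℝ) (hl : 0 < l) :
    Nonempty
      (({z : Fin m → ℂ | ∑ i, z i ^ 2 = (l : ℂ) ∧ ∀ i, (z i).im = 0} :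
          Set (Fin m → ℂ)) ≃ₜ
        ({x : EuclideanSpace ℝ (Fin m) | ‖x‖ = 1} : Set (EuclideanSpace ℝ (Fin m)))) ∧
      Nonempty
        (ContinuousMap.HomotopyEquiv
          ({z : Fin m → ℂ | ∑ i, z i ^ 2 = (l : ℂ) ∧ ∀ i, (z i).im = 0} :
            Set (Fin m → ℂ))
          ({z : Fin m → ℂ | ∑ i, z i ^ 2 = (l : ℂ)} : Set (Fin m → ℂ))) :=
  stmt8_general m l hl
end
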